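/- arXiv:1511.00792 — 3 statements merged into one kernel-verified Lean document; each statement's English description precedes it below -/
import Mathlib

section
/- If M₂ = Σ_{k=1}^K π_k μ̄_k μ̄_kᵀ is a D×D positive semidefinite matrix of rank K with π_k > 0, and W is a D×K matrix satisfying Wᵀ M₂ W = I_K, then the vectors μ̃_k := √π_k · Wᵀ μ̄_k, for k = 1,…,K, form an orthonormal family in ℝ^K. -/
open Matrix Finset

/-! With `V` the `K × D` matrix whose rows are `√π k • μ̄ k`, we have `M₂ = Vᵀ V`, so the
whitening condition says that the square matrix `V W` satisfies `(V W)ᵀ (V W) = 1`. A square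
matrix with a left inverse is invertible on both sides, hence `(V W) (V W)ᵀ = 1` too: the rows
of `V W`, which are exactly the vectors `√π k • Wᵀ μ̄ k`, are orthonormal. -/

namespace Matrix

variable {ι m n R : Type*}

theorem transpose_mul_self_eq_sum_vecMulVec [Fintype ι] [NonUnitalCommSemiring R]
    (v : ι → n → R) : (of v)ᵀ * of v = ∑ i, vecMulVec (v i) (v i) := by
  ext a b
  simp [mul_apply, vecMulVec_apply, sum_apply]

theorem transpose_mul_transpose_mul_self_mul [Fintype m] [Fintype n] [CommSemiring R]
    (V : Matrix m n R) (W : Matrix n ι R) :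
    Wᵀ * (Vᵀ * V) * W = (V * W)ᵀ * (V * W) := by
  simp only [transpose_mul, Matrix.mul_assoc]

theorem row_dotProduct_row_of_transpose_mul_self_eq_one [Fintype n] [DecidableEq n]
    [CommRing R] {A : Matrix n n R} (h : Aᵀ * A = 1) (i j : n) :
    A i ⬝ᵥ A j = (1 : Matrix n n R) i j := by
  rw [← mul_eq_one_comm.mp h]
  rfl

end Matrix

theorem stmt0_general (D K : ℕ) (π : Fin K → ℝ) (hπ : ∀ k, 0 < π k)
    (μbar : Fin K → (Fin D → ℝ))
    (M₂ : Matrix (Fin D) (Fin D) ℝ)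
    (hM₂ : M₂ = ∑ k, π k • Matrix.vecMulVec (μbar k) (μbar k))
    (W : Matrix (Fin D) (Fin K) ℝ)
    (hW : Wᵀ * M₂ * W = 1) :
    ∀ j k : Fin K,
      (Real.sqrt (π j) • (Wᵀ).mulVec (μbar j)) ⬝ᵥ (Real.sqrt (π k) • (Wᵀ).mulVec (μbar k))
        = if j = k then 1 else 0 := by
  intro j k
  set V : Matrix (Fin K) (Fin D) ℝ := of fun k => Real.sqrt (π k) • μbar k
  have hM₂V : M₂ = Vᵀ * V := by
    rw [hM₂, transpose_mul_self_eq_sum_vecMulVec]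
    refine sum_congr rfl fun l _ => ?_
    rw [smul_vecMulVec, vecMulVec_smul, smul_smul, Real.mul_self_sqrt (hπ l).le]
  have hrow : ∀ l, (V * W) l = Real.sqrt (π l) • Wᵀ *ᵥ μbar l := fun l => by
    rw [← mulVec_smul, mulVec_transpose]
    rfl
  rw [← hrow, ← hrow, row_dotProduct_row_of_transpose_mul_self_eq_one, one_apply]
  rwa [← transpose_mul_transpose_mul_self_mul, ← hM₂V]

/-- If `M₂ = ∑ k, π k • μ̄ k μ̄ kᵀ` is PSD of rank `K` with `π k > 0` and
`Wᵀ M₂ W = I`, then the vectors `μ̃ k = √(π k) • Wᵀ μ̄ k` are orthonormal. -/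
theorem stmt0 (D K : ℕ) (π : Fin K → ℝ) (hπ : ∀ k, 0 < π k)
    (μbar : Fin K → (Fin D → ℝ))
    (M₂ : Matrix (Fin D) (Fin D) ℝ)
    (hM₂ : M₂ = ∑ k, π k • Matrix.vecMulVec (μbar k) (μbar k))
    (hPSD : M₂.PosSemidef) (hrank : M₂.rank = K)
    (W : Matrix (Fin D) (Fin K) ℝ)
    (hW : Wᵀ * M₂ * W = 1) :
    ∀ j k : Fin K,
      (Real.sqrt (π j) • (Wᵀ).mulVec (μbar j)) ⬝ᵥ (Real.sqrt (π k) • (Wᵀ).mulVec (μbar k))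
        = if j = k then 1 else 0 :=
  stmt0_general D K π hπ μbar M₂ hM₂ W hW
end

section
/- Let M₂ and M̂₂ be symmetric PSD matrices with ‖M₂ − M̂₂‖₂ ≤ σ_K(M₂)/2, where σ_K denotes the K-th largest eigenvalue. If Ŵ whitens M̂₂ (i.e., Ŵᵀ M̂₂ Ŵ = I_K via its top-K eigendecomposition), then ‖Ŵ‖₂² ≤ 2/σ_K(M₂). -/
/-! Weyl's inequality: a nonzero vector `x` whose coordinates vanish in the eigenbasis of `M₂`
beyond index `K` and in the eigenbasis of `M̂₂` below index `K` exists, since these are only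
`D - 1` linear conditions; comparing the two Rayleigh quotients at `x` gives
`σ_K(M₂) ≤ σ_K(M̂₂) + ‖M₂ - M̂₂‖₂`, so `σ_K(M̂₂) ≥ σ_K(M₂) / 2`. As `Û` has orthonormal columns,
`‖Ŵ‖₂ ≤ ‖Σ̂^{-1/2}‖₂ = σ_K(M̂₂)^{-1/2}`. -/

open Matrix Finset

noncomputable def opNorm {m n : Type*} [Fintype m] [Fintype n] [DecidableEq n]
    (A : Matrix m n ℝ) : ℝ :=
  ‖(Matrix.toEuclideanLin A).toContinuousLinearMap‖

open scoped Matrix.Norms.L2Operator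

lemma opNorm_eq_l2_opNorm {m n : Type*} [Fintype m] [Fintype n] [DecidableEq n]
    (A : Matrix m n ℝ) : opNorm A = ‖A‖ := rfl

section L2OpNorm

variable {m n : Type*} [Fintype m] [Fintype n] [DecidableEq n]

lemma dotProduct_mulVec_le_l2_opNorm_mul (A : Matrix n n ℝ) (x : n → ℝ) :
    x ⬝ᵥ A *ᵥ x ≤ ‖A‖ * (x ⬝ᵥ x) := by
  set y : EuclideanSpace ℝ n := WithLp.toLp 2 x
  have hnorm : ‖y‖ ^ 2 = x ⬝ᵥ x := by
    rw [← real_inner_self_eq_norm_sq, EuclideanSpace.inner_eq_star_dotProduct]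
    simp [y]
  calc x ⬝ᵥ A *ᵥ x = inner ℝ y (WithLp.toLp 2 (A *ᵥ y.ofLp)) := by
        rw [EuclideanSpace.inner_eq_star_dotProduct]; simp [y, dotProduct_comm]
    _ ≤ ‖y‖ * ‖WithLp.toLp 2 (A *ᵥ y.ofLp)‖ := real_inner_le_norm _ _
    _ ≤ ‖y‖ * (‖A‖ * ‖y‖) := by gcongr; exact l2_opNorm_mulVec A y
    _ = ‖A‖ * (x ⬝ᵥ x) := by rw [← hnorm]; ring

lemma l2_opNorm_le_one_of_transpose_mul_self {U : Matrix m n ℝ} (hU : Uᵀ * U = 1) :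
    ‖U‖ ≤ 1 := by
  have h : ‖U‖ * ‖U‖ ≤ 1 := by
    rw [← l2_opNorm_conjTranspose_mul_self, conjTranspose_eq_transpose_of_trivial, hU,
      cstar_norm_def, map_one]
    exact ContinuousLinearMap.norm_id_le
  nlinarith [norm_nonneg U]

end L2OpNorm

section Rayleigh

variable {n : Type*} [Fintype n] [LinearOrder n]

lemma dotProduct_conj_diagonal_mulVec (Q : Matrix n n ℝ) (σ x : n → ℝ) :
    x ⬝ᵥ (Q * diagonal σ * Qᵀ) *ᵥ x = ∑ i, σ i * (Qᵀ *ᵥ x) i ^ 2 := by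
  rw [← mulVec_mulVec, ← mulVec_mulVec, dotProduct_mulVec, ← mulVec_transpose]
  simp [dotProduct, mulVec_diagonal, sq, mul_left_comm]

lemma dotProduct_self_eq_sum_transpose_mulVec_sq {Q : Matrix n n ℝ} (hQ : Qᵀ * Q = 1)
    (x : n → ℝ) : x ⬝ᵥ x = ∑ i, (Qᵀ *ᵥ x) i ^ 2 := by
  have h := dotProduct_conj_diagonal_mulVec Q 1 x
  rw [Pi.one_def, diagonal_one, Matrix.mul_one, mul_eq_one_comm.mp hQ, one_mulVec] at h
  simpa using h

lemma mul_sum_sq_le_sum_mul_sq {σ y : n → ℝ} (hσ : Antitone σ) {k : n}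
    (hy : ∀ i, k < i → y i = 0) : σ k * ∑ i, y i ^ 2 ≤ ∑ i, σ i * y i ^ 2 := by
  rw [mul_sum]
  refine sum_le_sum fun i _ => ?_
  rcases le_or_gt i k with hik | hki
  · exact mul_le_mul_of_nonneg_right (hσ hik) (sq_nonneg _)
  · simp [hy i hki]

lemma sum_mul_sq_le_mul_sum_sq {σ y : n → ℝ} (hσ : Antitone σ) {k : n}
    (hy : ∀ i, i < k → y i = 0) : ∑ i, σ i * y i ^ 2 ≤ σ k * ∑ i, y i ^ 2 := by
  rw [mul_sum]
  refine sum_le_sum fun i _ => ?_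
  rcases le_or_gt k i with hki | hik
  · exact mul_le_mul_of_nonneg_right (hσ hki) (sq_nonneg _)
  · simp [hy i hik]

lemma exists_ne_zero_mulVec_eq_zero_above_below (A B : Matrix n n ℝ) (k : n) :
    ∃ x ≠ 0, (∀ i, k < i → (A *ᵥ x) i = 0) ∧ ∀ i, i < k → (B *ᵥ x) i = 0 := by
  -- one coordinate condition for every index other than `k`
  let f : (n → ℝ) →ₗ[ℝ] ({i // i ≠ k} → ℝ) := LinearMap.pi fun i =>
    if k < i.1 then LinearMap.proj i.1 ∘ₗ A.mulVecLin else LinearMap.proj i.1 ∘ₗ B.mulVecLin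
  have hdim : Module.finrank ℝ ({i // i ≠ k} → ℝ) < Module.finrank ℝ (n → ℝ) := by
    simp [Fintype.card_subtype_compl, Fintype.card_pos_iff.mpr ⟨k⟩]
  obtain ⟨x, hx, hx0⟩ := (Submodule.ne_bot_iff _).mp (LinearMap.ker_ne_bot_of_finrank_lt hdim)
  have hf : ∀ i (hi : i ≠ k), f x ⟨i, hi⟩ = 0 := fun i hi => congrFun hx ⟨i, hi⟩
  refine ⟨x, hx0, fun i hki => ?_, fun i hik => ?_⟩
  · simpa [f, hki] using hf i hki.ne'
  · simpa [f, hik.not_gt] using hf i hik.ne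

end Rayleigh

lemma l2_opNorm_mul_diagonal_inv_sqrt_sq_le {m n : Type*} [Fintype m] [Fintype n]
    [DecidableEq n] {U : Matrix m n ℝ} (hU : Uᵀ * U = 1) {s : n → ℝ} {c : ℝ} (hc : 0 < c)
    (hs : ∀ j, c ≤ s j) : ‖U * diagonal (fun j => (√(s j))⁻¹)‖ ^ 2 ≤ c⁻¹ := by
  have hd : ‖fun j => (√(s j))⁻¹‖ ≤ (√c)⁻¹ := by
    refine (pi_norm_le_iff_of_nonneg (by positivity)).2 fun j => ?_
    rw [Real.norm_of_nonneg (by positivity)]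
    gcongr
    exact hs j
  calc ‖U * diagonal (fun j => (√(s j))⁻¹)‖ ^ 2
      ≤ (‖U‖ * ‖diagonal (fun j => (√(s j))⁻¹)‖) ^ 2 := by gcongr; exact l2_opNorm_mul _ _
    _ ≤ (1 * (√c)⁻¹) ^ 2 := by
        rw [l2_opNorm_diagonal]; gcongr; exact l2_opNorm_le_one_of_transpose_mul_self hU
    _ = c⁻¹ := by rw [one_mul, inv_pow, Real.sq_sqrt hc.le]

theorem le_add_l2_opNorm_sub_of_eigendecomposition {n : Type*} [Fintype n] [LinearOrder n]
    {Q Q' : Matrix n n ℝ} {σ σ' : n → ℝ} (hQ : Qᵀ * Q = 1) (hσ : Antitone σ)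
    (hQ' : Q'ᵀ * Q' = 1) (hσ' : Antitone σ') (k : n) :
    σ k ≤ σ' k + ‖Q * diagonal σ * Qᵀ - Q' * diagonal σ' * Q'ᵀ‖ := by
  obtain ⟨x, hx0, hx_top, hx_bot⟩ := exists_ne_zero_mulVec_eq_zero_above_below Qᵀ Q'ᵀ k
  have hM : σ k * (x ⬝ᵥ x) ≤ x ⬝ᵥ (Q * diagonal σ * Qᵀ) *ᵥ x := by
    rw [dotProduct_conj_diagonal_mulVec, dotProduct_self_eq_sum_transpose_mulVec_sq hQ]
    exact mul_sum_sq_le_sum_mul_sq hσ hx_top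
  have hN : x ⬝ᵥ (Q' * diagonal σ' * Q'ᵀ) *ᵥ x ≤ σ' k * (x ⬝ᵥ x) := by
    rw [dotProduct_conj_diagonal_mulVec, dotProduct_self_eq_sum_transpose_mulVec_sq hQ']
    exact sum_mul_sq_le_mul_sum_sq hσ' hx_bot
  have hE := dotProduct_mulVec_le_l2_opNorm_mul (Q * diagonal σ * Qᵀ - Q' * diagonal σ' * Q'ᵀ) x
  rw [sub_mulVec, dotProduct_sub] at hE
  have hx : 0 < x ⬝ᵥ x := dotProduct_self_star_pos_iff.mpr hx0
  refine le_of_mul_le_mul_right ?_ hx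
  linarith

/-- if `‖M₂ - M̂₂‖₂ ≤ σ_K(M₂)/2` and `Ŵ` whitens `M̂₂` via its top-K
eigendecomposition, then `‖Ŵ‖₂² ≤ 2/σ_K(M₂)`. -/
theorem stmt3 (D K : ℕ) (hK : 0 < K) (hKD : K ≤ D)
    (M₂ N₂ : Matrix (Fin D) (Fin D) ℝ)
    -- full sorted eigendecomposition of M₂
    (σ : Fin D → ℝ) (Q : Matrix (Fin D) (Fin D) ℝ)
    (hQ : Qᵀ * Q = 1) (hsort : Antitone σ)
    (hdec : M₂ = Q * Matrix.diagonal σ * Qᵀ)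
    -- full sorted eigendecomposition of N₂ = M̂₂
    (σ' : Fin D → ℝ) (Q' : Matrix (Fin D) (Fin D) ℝ)
    (hQ' : Q'ᵀ * Q' = 1) (hsort' : Antitone σ')
    (hdec' : N₂ = Q' * Matrix.diagonal σ' * Q'ᵀ)
    (hσK : 0 < σ ⟨K - 1, by omega⟩)
    (hε : opNorm (M₂ - N₂) ≤ σ ⟨K - 1, by omega⟩ / 2)
    -- Ŵ built from the top-K eigenpairs of N₂
    (U' : Matrix (Fin D) (Fin K) ℝ)
    (hU' : U' = Q'.submatrix id (Fin.castLE hKD))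
    (W' : Matrix (Fin D) (Fin K) ℝ)
    (hW' : W' = U' * Matrix.diagonal (fun k => (Real.sqrt (σ' (Fin.castLE hKD k)))⁻¹)) :
    opNorm W' ^ 2 ≤ 2 / σ ⟨K - 1, by omega⟩ := by
  set k : Fin D := ⟨K - 1, by omega⟩
  subst hdec hdec' hU' hW'
  have hweyl := le_add_l2_opNorm_sub_of_eigendecomposition hQ hsort hQ' hsort' k
  rw [opNorm_eq_l2_opNorm] at hε ⊢
  have hσ'k : σ k / 2 ≤ σ' k := by linarith
  have hU'_orth :
      (Q'.submatrix id (Fin.castLE hKD))ᵀ * Q'.submatrix id (Fin.castLE hKD) = 1 := by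
    rw [transpose_submatrix, ← submatrix_mul _ _ _ _ _ Function.bijective_id, hQ',
      submatrix_one _ (Fin.castLE_injective hKD)]
  calc _ ≤ (σ k / 2)⁻¹ := l2_opNorm_mul_diagonal_inv_sqrt_sq_le hU'_orth (by positivity)
        fun j => hσ'k.trans (hsort' (by simp [k, Fin.le_def]; omega))
    _ = 2 / σ k := inv_div _ _
end

section
/- With the same mixture model and w₁, w₂, w₃ conditionally i.i.d. given h, the third-order joint probability tensor M₃ with entries [M₃]_{ijl} = P[w₁=y_i, w₂=y_j, w₃=y_l] satisfies M₃ = Σ_{k=1}^K π_k μ̄_k ⊗ μ̄_k ⊗ μ̄_k, and if W whitens M₂ = Σ_k π_k μ̄_k μ̄_kᵀ, then M₃(W,W,W) = Σ_k (1/√π_k) μ̃_k ⊗ μ̃_k ⊗ μ̃_k where μ̃_k = √π_k Wᵀ μ̄_k are orthonormal. -/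
/-!
Summing the conditional-independence identity over the fibres of `h` gives the mixture form of
`M₃`. For the whitening, put `u k = √(π k) • μ̄ k` and let `B` be the matrix with columns `u k`,
so that `M₂ = B Bᵀ`. Then `(Wᵀ B) (Wᵀ B)ᵀ = 1` for the square matrix `Wᵀ B`, hence also
`(Wᵀ B)ᵀ (Wᵀ B) = 1`, which is the orthonormality of `μ̃ k = Wᵀ u k`. Finally the contraction
`M₃(W,W,W)` is linear in `M₃` and sends the rank-one cube `μ̄ k ⊗ μ̄ k ⊗ μ̄ k` to the cube of
`Wᵀ μ̄ k = (√(π k))⁻¹ • μ̃ k`.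
-/

open MeasureTheory Matrix Finset

section Mixture

variable {Ω κ : Type*} [MeasurableSpace Ω] [Fintype κ] [MeasurableSpace κ]
  [MeasurableSingletonClass κ] (μ : Measure Ω) [IsFiniteMeasure μ] {h : Ω → κ}

theorem measureReal_eq_sum_inter_fiber (hh : Measurable h) (S : Set Ω) :
    μ.real S = ∑ k, μ.real (S ∩ {ω | h ω = k}) := by
  have hfib := sum_measureReal_preimage_singleton (μ := μ.restrict S) univ
    (fun k _ => hh (measurableSet_singleton k))
  simp only [coe_univ, Set.preimage_univ, measureReal_restrict_apply_univ] at hfib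
  rw [← hfib]
  refine sum_congr rfl fun k _ => ?_
  rw [measureReal_restrict_apply (hh (measurableSet_singleton k)), Set.inter_comm]
  rfl

theorem measureReal_eq_sum_of_condIndep (hh : Measurable h) (π p q r : κ → ℝ)
    (hπ : ∀ k, π k ≠ 0) (S : Set Ω)
    (hS : ∀ k, μ.real (S ∩ {ω | h ω = k}) * π k ^ 2 = (π k * p k) * (π k * q k) * (π k * r k)) :
    μ.real S = ∑ k, π k * p k * q k * r k := by
  rw [measureReal_eq_sum_inter_fiber μ hh S]
  refine sum_congr rfl fun k _ => mul_right_cancel₀ (pow_ne_zero 2 (hπ k)) ?_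
  rw [hS k]
  ring

end Mixture

section Contraction

variable {ι κ n : Type*} [Fintype ι] [Fintype κ]

/-- `T(W,W,W)` in the notation of the paper. -/
def cubeContract (T : ι → ι → ι → ℝ) (W : Matrix ι n ℝ) (a b d : n) : ℝ :=
  ∑ i, ∑ j, ∑ l, T i j l * W i a * W j b * W l d

theorem cubeContract_sum (T : κ → ι → ι → ι → ℝ) (W : Matrix ι n ℝ) (a b d : n) :
    cubeContract (fun i j l => ∑ k, T k i j l) W a b d = ∑ k, cubeContract (T k) W a b d := by
  simp only [cubeContract, sum_mul]
  simp_rw [sum_comm (γ := κ)]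

theorem cubeContract_const_mul (c : ℝ) (T : ι → ι → ι → ℝ) (W : Matrix ι n ℝ) (a b d : n) :
    cubeContract (fun i j l => c * T i j l) W a b d = c * cubeContract T W a b d := by
  simp only [cubeContract, mul_sum, mul_assoc]

theorem cubeContract_cube (v : ι → ℝ) (W : Matrix ι n ℝ) (a b d : n) :
    cubeContract (fun i j l => v i * v j * v l) W a b d
      = (Wᵀ *ᵥ v) a * (Wᵀ *ᵥ v) b * (Wᵀ *ᵥ v) d := by
  simp only [cubeContract, mulVec, dotProduct, transpose_apply, sum_mul, mul_sum]
  rw [sum_comm_cycle]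
  refine sum_congr rfl fun i _ => ?_
  rw [sum_comm]
  exact sum_congr rfl fun j _ => sum_congr rfl fun l _ => by ring

theorem cubeContract_sum_mul_cube (c : κ → ℝ) (v : κ → ι → ℝ) (W : Matrix ι n ℝ) (a b d : n) :
    cubeContract (fun i j l => ∑ k, c k * v k i * v k j * v k l) W a b d
      = ∑ k, c k * (Wᵀ *ᵥ v k) a * (Wᵀ *ᵥ v k) b * (Wᵀ *ᵥ v k) d := by
  rw [cubeContract_sum]
  refine sum_congr rfl fun k _ => ?_
  have hassoc : (fun i j l => c k * v k i * v k j * v k l)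
      = fun i j l => c k * (v k i * v k j * v k l) := by
    funext i j l
    ring
  rw [hassoc, cubeContract_const_mul, cubeContract_cube]
  ring

end Contraction

theorem sum_vecMulVec_self_eq_mul_transpose {ι κ : Type*} [Fintype κ] (u : κ → ι → ℝ) :
    ∑ k, vecMulVec (u k) (u k) = of (fun i k => u k i) * (of fun i k => u k i)ᵀ := by
  ext i j
  simp [Matrix.sum_apply, mul_apply, vecMulVec_apply]

theorem transpose_mulVec_dotProduct_of_whitens {ι κ : Type*} [Fintype ι] [Fintype κ]
    [DecidableEq κ] (u : κ → ι → ℝ)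
    (W : Matrix ι κ ℝ) (hW : Wᵀ * (∑ k, vecMulVec (u k) (u k)) * W = 1) (k k' : κ) :
    (Wᵀ *ᵥ u k) ⬝ᵥ (Wᵀ *ᵥ u k') = if k = k' then 1 else 0 := by
  let B : Matrix ι κ ℝ := of fun i k => u k i
  have hWB : (Wᵀ * B) * (Wᵀ * B)ᵀ = 1 := by
    rw [transpose_mul, transpose_transpose, ← hW, sum_vecMulVec_self_eq_mul_transpose]
    simp only [B, Matrix.mul_assoc]
  have hBW : ((Wᵀ * B)ᵀ * (Wᵀ * B)) k k' = (1 : Matrix κ κ ℝ) k k' := by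
    rw [mul_eq_one_comm.mp hWB]
  rw [← one_apply, ← hBW]
  simp [B, mul_apply, mulVec, dotProduct, mul_comm]

theorem smul_vecMulVec_self_eq_sqrt {ι : Type*} {p : ℝ} (hp : 0 ≤ p) (v : ι → ℝ) :
    p • vecMulVec v v = vecMulVec (√p • v) (√p • v) := by
  rw [smul_vecMulVec, vecMulVec_smul, smul_smul, Real.mul_self_sqrt hp]

theorem inv_sqrt_mul_sqrt_smul_cube {n : Type*} {p : ℝ} (hp : 0 < p) (x : n → ℝ) (a b d : n) :
    (√p)⁻¹ * (√p • x) a * (√p • x) b * (√p • x) d = p * x a * x b * x d := by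
  have hne : √p ≠ 0 := (Real.sqrt_pos.mpr hp).ne'
  simp only [Pi.smul_apply, smul_eq_mul]
  field_simp
  rw [Real.sq_sqrt hp.le]
  ring

theorem stmt18_general {Ω : Type*} [MeasurableSpace Ω]
    (μ : Measure Ω) [IsProbabilityMeasure μ]
    (D K : ℕ) (π : Fin K → ℝ) (hπpos : ∀ k, 0 < π k)
    (μbar : Fin K → Fin D → ℝ)
    (h : Ω → Fin K) (w₁ w₂ w₃ : Ω → Fin D)
    (hmh : Measurable h)
    -- conditional independence of w₁, w₂, w₃ given h
    (hci : ∀ k i j l,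
      (μ ({ω | w₁ ω = i} ∩ {ω | w₂ ω = j} ∩ {ω | w₃ ω = l} ∩ {ω | h ω = k})).toReal
          * (π k) ^ 2
        = (π k * μbar k i) * (π k * μbar k j) * (π k * μbar k l))
    (W : Matrix (Fin D) (Fin K) ℝ)
    (hW : Wᵀ * (∑ k, π k • Matrix.vecMulVec (μbar k) (μbar k)) * W = 1) :
    (∀ i j l, (μ ({ω | w₁ ω = i} ∩ {ω | w₂ ω = j} ∩ {ω | w₃ ω = l})).toReal
        = ∑ k, π k * μbar k i * μbar k j * μbar k l) ∧
    (∀ a b c,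
      (∑ i, ∑ j, ∑ l,
          (∑ k, π k * μbar k i * μbar k j * μbar k l) * W i a * W j b * W l c)
        = ∑ k, (Real.sqrt (π k))⁻¹
            * (Real.sqrt (π k) • (Wᵀ).mulVec (μbar k)) a
            * (Real.sqrt (π k) • (Wᵀ).mulVec (μbar k)) b
            * (Real.sqrt (π k) • (Wᵀ).mulVec (μbar k)) c) ∧
    (∀ k k' : Fin K,
      (Real.sqrt (π k) • (Wᵀ).mulVec (μbar k)) ⬝ᵥ (Real.sqrt (π k') • (Wᵀ).mulVec (μbar k'))
        = if k = k' then 1 else 0) := by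
  refine ⟨fun i j l => ?_, fun a b c => ?_, fun k k' => ?_⟩
  · exact measureReal_eq_sum_of_condIndep μ hmh π _ _ _ (fun k => (hπpos k).ne') _
      (fun k => hci k i j l)
  · exact (cubeContract_sum_mul_cube π μbar W a b c).trans
      (sum_congr rfl fun k _ => (inv_sqrt_mul_sqrt_smul_cube (hπpos k) _ a b c).symm)
  · simp_rw [smul_vecMulVec_self_eq_sqrt (hπpos _).le] at hW
    simpa only [mulVec_smul] using transpose_mulVec_dotProduct_of_whitens _ W hW k k'

/-- with `w₁, w₂, w₃` conditionally i.i.d. given `h`, the third-order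
joint probability tensor is `M₃ = ∑ k, π k • μ̄ k ⊗ μ̄ k ⊗ μ̄ k`; moreover, if `W`
whitens `M₂ = ∑ k, π k • μ̄ k μ̄ kᵀ`, then
`M₃(W,W,W) = ∑ k, (1/√(π k)) μ̃ k ⊗ μ̃ k ⊗ μ̃ k` where `μ̃ k = √(π k) Wᵀ μ̄ k` are
orthonormal. -/
theorem stmt18 {Ω : Type*} [MeasurableSpace Ω]
    (μ : Measure Ω) [IsProbabilityMeasure μ]
    (D K : ℕ) (π : Fin K → ℝ) (hπpos : ∀ k, 0 < π k) (hπ1 : ∑ k, π k = 1)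
    (μbar : Fin K → Fin D → ℝ)
    (hμpos : ∀ k i, 0 ≤ μbar k i) (hμ1 : ∀ k, ∑ i, μbar k i = 1)
    (h : Ω → Fin K) (w₁ w₂ w₃ : Ω → Fin D)
    (hmh : Measurable h) (hm1 : Measurable w₁) (hm2 : Measurable w₂) (hm3 : Measurable w₃)
    (hh : ∀ k, (μ {ω | h ω = k}).toReal = π k)
    (hc1 : ∀ k i, (μ ({ω | w₁ ω = i} ∩ {ω | h ω = k})).toReal = π k * μbar k i)
    (hc2 : ∀ k i, (μ ({ω | w₂ ω = i} ∩ {ω | h ω = k})).toReal = π k * μbar k i)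
    (hc3 : ∀ k i, (μ ({ω | w₃ ω = i} ∩ {ω | h ω = k})).toReal = π k * μbar k i)
    -- conditional independence of w₁, w₂, w₃ given h
    (hci : ∀ k i j l,
      (μ ({ω | w₁ ω = i} ∩ {ω | w₂ ω = j} ∩ {ω | w₃ ω = l} ∩ {ω | h ω = k})).toReal
          * (π k) ^ 2
        = (π k * μbar k i) * (π k * μbar k j) * (π k * μbar k l))
    (W : Matrix (Fin D) (Fin K) ℝ)
    (hW : Wᵀ * (∑ k, π k • Matrix.vecMulVec (μbar k) (μbar k)) * W = 1) :
    (∀ i j l, (μ ({ω | w₁ ω = i} ∩ {ω | w₂ ω = j} ∩ {ω | w₃ ω = l})).toReal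
        = ∑ k, π k * μbar k i * μbar k j * μbar k l) ∧
    (∀ a b c,
      (∑ i, ∑ j, ∑ l,
          (∑ k, π k * μbar k i * μbar k j * μbar k l) * W i a * W j b * W l c)
        = ∑ k, (Real.sqrt (π k))⁻¹
            * (Real.sqrt (π k) • (Wᵀ).mulVec (μbar k)) a
            * (Real.sqrt (π k) • (Wᵀ).mulVec (μbar k)) b
            * (Real.sqrt (π k) • (Wᵀ).mulVec (μbar k)) c) ∧
    (∀ k k' : Fin K,
      (Real.sqrt (π k) • (Wᵀ).mulVec (μbar k)) ⬝ᵥ (Real.sqrt (π k') • (Wᵀ).mulVec (μbar k'))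
        = if k = k' then 1 else 0) :=
  stmt18_general μ D K π hπpos μbar h w₁ w₂ w₃ hmh hci W hW
end
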